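/- arXiv:2104.11974 — 5 statements merged into one kernel-verified Lean document; each statement's English description precedes it below -/
import Mathlib

section
/- There exist universal constants C ≥ c > 0 such that for all b, q ∈ [0,∞): c^{1+q}·min{1+q, b}^{1+q} ≤ ∫_0^b e^{-ω} ω^q dω ≤ C^{1+q}·min{1+q, b}^{1+q}, and c·e^b·b^{1+q}/(1+q+b) ≤ ∫_0^b e^{ω} ω^q dω ≤ C·e^b·b^{1+q}/(1+q+b). -/
/-!
Write `p = 1 + q`. For `∫₀^b e^{-ω} ω^q`, comparing `e^{-ω}` with `e^{-m}` on `[0, m]`,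
`m = min p b`, gives the lower bound, and `p ≤ e^p` absorbs the factor `1 / p`. For the upper
bound, `e^{-ω} ≤ 1` settles `b ≤ p`, while for `b ≥ p` the estimate `ω^q ≤ (2p)^q e^{ω/2}`
(from `y ≤ e^{y-1}`) leaves the integrable weight `e^{-ω/2}`.

For `∫₀^b e^ω ω^q`, the integrand times `ω + p` is the derivative of `e^ω ω^p`, so
`∫₀^b (ω + p) e^ω ω^q dω = e^b b^p`, and `ω + p ≤ b + p` gives the lower bound. The upper bound
is the smaller of `e^b b^p / p` (from `e^ω ≤ e^b`) and `e^b b^p / (b + q)` (from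
`ω^q ≤ b^q e^{q(ω/b - 1)}`), which is at most `2 e^b b^p / (p + b)`.
-/

open MeasureTheory Real Set

lemma rpow_le_exp_mul_sub_one {y q : ℝ} (hy : 0 ≤ y) (hq : 0 ≤ q) :
    y ^ q ≤ exp (q * (y - 1)) :=
  calc y ^ q ≤ exp (y - 1) ^ q := rpow_le_rpow hy (by linarith [add_one_le_exp (y - 1)]) hq
    _ = exp (q * (y - 1)) := by rw [← exp_mul, mul_comm]

lemma rpow_le_rpow_mul_exp {x a q : ℝ} (hx : 0 ≤ x) (ha : 0 < a) (hq : 0 ≤ q) :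
    x ^ q ≤ a ^ q * exp (q * (x / a - 1)) :=
  calc x ^ q = a ^ q * (x / a) ^ q := by
        rw [div_rpow hx ha.le, mul_div_cancel₀ _ (rpow_pos_of_pos ha q).ne']
    _ ≤ a ^ q * exp (q * (x / a - 1)) :=
        mul_le_mul_of_nonneg_left (rpow_le_exp_mul_sub_one (div_nonneg hx ha.le) hq)
          (rpow_nonneg ha.le q)

lemma setIntegral_Icc_mono_of_continuous {f g : ℝ → ℝ} {a b : ℝ} (hf : Continuous f)
    (hg : Continuous g) (h : ∀ x ∈ Icc a b, f x ≤ g x) :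
    ∫ x in Icc a b, f x ≤ ∫ x in Icc a b, g x :=
  setIntegral_mono_on hf.integrableOn_Icc hg.integrableOn_Icc measurableSet_Icc h

lemma setIntegral_Icc_rpow {b q : ℝ} (hb : 0 ≤ b) (hq : -1 < q) :
    ∫ ω in Icc 0 b, ω ^ q = b ^ (1 + q) / (1 + q) := by
  rw [integral_Icc_eq_integral_Ioc, ← intervalIntegral.integral_of_le hb,
    integral_rpow (Or.inl hq), zero_rpow (by linarith), add_comm q 1, sub_zero]

lemma setIntegral_Icc_exp_mul {b k : ℝ} (hb : 0 ≤ b) (hk : k ≠ 0) :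
    ∫ ω in Icc 0 b, exp (k * ω) = (exp (k * b) - 1) / k := by
  rw [integral_Icc_eq_integral_Ioc, ← intervalIntegral.integral_of_le hb,
    intervalIntegral.integral_comp_mul_left exp hk, mul_zero, integral_exp, exp_zero,
    smul_eq_mul, inv_mul_eq_div]

section ExpNeg

variable {b q : ℝ}

lemma exp_neg_mul_rpow_le {x : ℝ} (hx : 0 ≤ x) (hq : 0 ≤ q) :
    exp (-x) * x ^ q ≤ (2 * (1 + q)) ^ q * exp (-2⁻¹ * x) := by
  have hp : 0 < 2 * (1 + q) := by linarith
  have hexponent : q * (x / (2 * (1 + q)) - 1) ≤ 2⁻¹ * x := by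
    have : q * x / (2 * (1 + q)) ≤ 2⁻¹ * x := by
      rw [div_le_iff₀ hp]
      nlinarith
    rw [mul_sub, mul_one, mul_div_assoc']
    linarith
  calc exp (-x) * x ^ q
      ≤ exp (-x) * ((2 * (1 + q)) ^ q * exp (2⁻¹ * x)) := by
        gcongr
        exact (rpow_le_rpow_mul_exp hx hp hq).trans (by gcongr)
    _ = (2 * (1 + q)) ^ q * exp (-2⁻¹ * x) := by
        rw [mul_left_comm, ← exp_add]
        ring_nf

lemma setIntegral_exp_neg_mul_rpow_le_two_mul (hb : 0 ≤ b) (hq : 0 ≤ q) :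
    ∫ ω in Icc 0 b, exp (-ω) * ω ^ q ≤ 2 * (2 * (1 + q)) ^ q := by
  calc ∫ ω in Icc 0 b, exp (-ω) * ω ^ q
      ≤ ∫ ω in Icc 0 b, (2 * (1 + q)) ^ q * exp (-2⁻¹ * ω) :=
        setIntegral_Icc_mono_of_continuous (by fun_prop (disch := assumption)) (by fun_prop)
          fun x hx => exp_neg_mul_rpow_le hx.1 hq
    _ = (2 * (1 + q)) ^ q * (2 * (1 - exp (-2⁻¹ * b))) := by
        rw [integral_const_mul, setIntegral_Icc_exp_mul hb (by norm_num)]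
        ring
    _ ≤ 2 * (2 * (1 + q)) ^ q := by
        nlinarith [exp_pos (-2⁻¹ * b), rpow_nonneg (by linarith : (0 : ℝ) ≤ 2 * (1 + q)) q]

lemma setIntegral_exp_neg_mul_rpow_le_rpow_div (hb : 0 ≤ b) (hq : 0 ≤ q) :
    ∫ ω in Icc 0 b, exp (-ω) * ω ^ q ≤ b ^ (1 + q) / (1 + q) := by
  calc ∫ ω in Icc 0 b, exp (-ω) * ω ^ q
      ≤ ∫ ω in Icc 0 b, ω ^ q :=
        setIntegral_Icc_mono_of_continuous (by fun_prop (disch := assumption))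
          (by fun_prop (disch := assumption)) fun x hx =>
            mul_le_of_le_one_left (rpow_nonneg hx.1 q) (exp_le_one_iff.mpr (by linarith [hx.1]))
    _ = b ^ (1 + q) / (1 + q) := setIntegral_Icc_rpow hb (by linarith)

lemma setIntegral_exp_neg_mul_rpow_le (hb : 0 ≤ b) (hq : 0 ≤ q) :
    ∫ ω in Icc 0 b, exp (-ω) * ω ^ q ≤ 2 ^ (1 + q) * min (1 + q) b ^ (1 + q) := by
  have hp : 1 ≤ 1 + q := by linarith
  rcases le_total b (1 + q) with hbp | hpb
  · rw [min_eq_right hbp]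
    calc ∫ ω in Icc 0 b, exp (-ω) * ω ^ q ≤ b ^ (1 + q) / (1 + q) :=
          setIntegral_exp_neg_mul_rpow_le_rpow_div hb hq
      _ ≤ b ^ (1 + q) := div_le_self (by positivity) hp
      _ ≤ 2 ^ (1 + q) * b ^ (1 + q) :=
          le_mul_of_one_le_left (by positivity) (one_le_rpow (by norm_num) (by linarith))
  · rw [min_eq_left hpb, ← mul_rpow (by norm_num) (by linarith)]
    calc ∫ ω in Icc 0 b, exp (-ω) * ω ^ q ≤ 2 * (2 * (1 + q)) ^ q :=
          setIntegral_exp_neg_mul_rpow_le_two_mul hb hq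
      _ ≤ (2 * (1 + q)) * (2 * (1 + q)) ^ q := by gcongr; linarith
      _ = (2 * (1 + q)) ^ (1 + q) := (rpow_one_add' (by positivity) (by linarith)).symm

lemma exp_neg_mul_rpow_div_le_setIntegral (hb : 0 ≤ b) (hq : 0 ≤ q) :
    exp (-b) * (b ^ (1 + q) / (1 + q)) ≤ ∫ ω in Icc 0 b, exp (-ω) * ω ^ q := by
  rw [← setIntegral_Icc_rpow hb (by linarith), ← integral_const_mul]
  exact setIntegral_Icc_mono_of_continuous (by fun_prop (disch := assumption))
    (by fun_prop (disch := assumption)) fun x hx =>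
      mul_le_mul_of_nonneg_right (exp_le_exp.mpr (neg_le_neg hx.2)) (rpow_nonneg hx.1 q)

lemma exp_neg_two_rpow_mul_le_setIntegral (hb : 0 ≤ b) (hq : 0 ≤ q) :
    exp (-2) ^ (1 + q) * min (1 + q) b ^ (1 + q) ≤ ∫ ω in Icc 0 b, exp (-ω) * ω ^ q := by
  set m := min (1 + q) b
  have hm : 0 ≤ m := le_min (by linarith) hb
  have hp : 0 < 1 + q := by linarith
  have hweight : exp (-2 * (1 + q)) ≤ exp (-m) / (1 + q) := by
    rw [le_div_iff₀ hp]
    calc exp (-2 * (1 + q)) * (1 + q) ≤ exp (-2 * (1 + q)) * exp (1 + q) := by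
          gcongr; linarith [add_one_le_exp (1 + q)]
      _ = exp (-(1 + q)) := by rw [← exp_add]; ring_nf
      _ ≤ exp (-m) := exp_le_exp.mpr (neg_le_neg (min_le_left _ _))
  calc exp (-2) ^ (1 + q) * m ^ (1 + q) ≤ exp (-m) * (m ^ (1 + q) / (1 + q)) := by
        rw [← exp_mul, mul_div_left_comm, mul_comm]
        exact mul_le_mul_of_nonneg_left hweight (rpow_nonneg hm _)
    _ ≤ ∫ ω in Icc 0 m, exp (-ω) * ω ^ q := exp_neg_mul_rpow_div_le_setIntegral hm hq
    _ ≤ ∫ ω in Icc 0 b, exp (-ω) * ω ^ q :=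
        setIntegral_mono_set
          ((continuous_exp.comp continuous_neg).mul (continuous_rpow_const hq)).integrableOn_Icc
          ((ae_restrict_iff' measurableSet_Icc).mpr (.of_forall fun x hx =>
            mul_nonneg (exp_pos _).le (rpow_nonneg hx.1 q)))
          (Icc_subset_Icc_right (min_le_right _ _)).eventuallyLE

end ExpNeg

section ExpPos

variable {b q : ℝ}

lemma hasDerivAt_exp_mul_rpow_one_add {x : ℝ} (hx : 0 ≤ x) (hq : 0 ≤ q) :
    HasDerivAt (fun ω => exp ω * ω ^ (1 + q)) ((x + (1 + q)) * (exp x * x ^ q)) x := by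
  have hpow := hasDerivAt_rpow_const (x := x) (p := 1 + q) (Or.inr (by linarith))
  rw [add_sub_cancel_left] at hpow
  refine ((hasDerivAt_exp x).mul hpow).congr_deriv ?_
  rw [rpow_one_add' hx (by linarith)]
  ring

lemma setIntegral_add_mul_exp_mul_rpow (hb : 0 ≤ b) (hq : 0 ≤ q) :
    ∫ ω in Icc 0 b, (ω + (1 + q)) * (exp ω * ω ^ q) = exp b * b ^ (1 + q) := by
  rw [integral_Icc_eq_integral_Ioc, ← intervalIntegral.integral_of_le hb,
    intervalIntegral.integral_eq_sub_of_hasDerivAt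
      (fun x hx => hasDerivAt_exp_mul_rpow_one_add (uIcc_of_le hb ▸ hx).1 hq)
      ((show Continuous fun ω : ℝ => (ω + (1 + q)) * (exp ω * ω ^ q) by
        fun_prop (disch := assumption)).intervalIntegrable _ _),
    zero_rpow (by linarith), mul_zero, sub_zero]

lemma exp_mul_rpow_div_le_setIntegral (hb : 0 ≤ b) (hq : 0 ≤ q) :
    exp b * b ^ (1 + q) / (1 + q + b) ≤ ∫ ω in Icc 0 b, exp ω * ω ^ q := by
  rw [div_le_iff₀ (by linarith), ← integral_mul_const,
    ← setIntegral_add_mul_exp_mul_rpow hb hq]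
  exact setIntegral_Icc_mono_of_continuous (by fun_prop (disch := assumption))
    (by fun_prop (disch := assumption)) fun x hx => by
      rw [mul_comm]
      exact mul_le_mul_of_nonneg_left (by linarith [hx.2])
        (mul_nonneg (exp_pos x).le (rpow_nonneg hx.1 q))

lemma setIntegral_exp_mul_rpow_le_div_one_add (hb : 0 ≤ b) (hq : 0 ≤ q) :
    ∫ ω in Icc 0 b, exp ω * ω ^ q ≤ exp b * b ^ (1 + q) / (1 + q) := by
  rw [mul_div_assoc, ← setIntegral_Icc_rpow hb (by linarith), ← integral_const_mul]
  exact setIntegral_Icc_mono_of_continuous (by fun_prop (disch := assumption))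
    (by fun_prop (disch := assumption)) fun x hx =>
      mul_le_mul_of_nonneg_right (exp_le_exp.mpr hx.2) (rpow_nonneg hx.1 q)

lemma exp_mul_rpow_le {x : ℝ} (hb : 0 < b) (hx : 0 ≤ x) (hq : 0 ≤ q) :
    exp x * x ^ q ≤ b ^ q * exp (-q) * exp ((1 + q / b) * x) := by
  calc exp x * x ^ q ≤ exp x * (b ^ q * exp (q * (x / b - 1))) :=
        mul_le_mul_of_nonneg_left (rpow_le_rpow_mul_exp hx hb hq) (exp_pos x).le
    _ = b ^ q * exp (-q) * exp ((1 + q / b) * x) := by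
        rw [mul_left_comm, mul_assoc, ← exp_add, ← exp_add]
        ring_nf

lemma setIntegral_exp_mul_rpow_le_div_add (hb : 0 < b) (hq : 0 ≤ q) :
    ∫ ω in Icc 0 b, exp ω * ω ^ q ≤ exp b * b ^ (1 + q) / (b + q) := by
  have hα : 0 < 1 + q / b := by positivity
  calc ∫ ω in Icc 0 b, exp ω * ω ^ q
      ≤ ∫ ω in Icc 0 b, b ^ q * exp (-q) * exp ((1 + q / b) * ω) :=
        setIntegral_Icc_mono_of_continuous (by fun_prop (disch := assumption)) (by fun_prop)
          fun x hx => exp_mul_rpow_le hb hx.1 hq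
    _ = b ^ q * exp (-q) * ((exp ((1 + q / b) * b) - 1) / (1 + q / b)) := by
        rw [integral_const_mul, setIntegral_Icc_exp_mul hb.le hα.ne']
    _ ≤ b ^ q * exp (-q) * (exp ((1 + q / b) * b) / (1 + q / b)) := by
        gcongr; linarith
    _ = exp b * b ^ (1 + q) / (b + q) := by
        rw [rpow_one_add' hb.le (by linarith), add_mul, div_mul_cancel₀ _ hb.ne', exp_add,
          exp_neg]
        field_simp

lemma setIntegral_exp_mul_rpow_le (hb : 0 ≤ b) (hq : 0 ≤ q) :
    ∫ ω in Icc 0 b, exp ω * ω ^ q ≤ 2 * exp b * b ^ (1 + q) / (1 + q + b) := by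
  have hnum : 0 ≤ exp b * b ^ (1 + q) := by positivity
  rw [mul_assoc]
  rcases le_total b 1 with hb1 | hb1
  · refine (setIntegral_exp_mul_rpow_le_div_one_add hb hq).trans ?_
    rw [div_le_div_iff₀ (by linarith) (by linarith)]
    nlinarith
  · refine (setIntegral_exp_mul_rpow_le_div_add (by linarith) hq).trans ?_
    rw [div_le_div_iff₀ (by linarith) (by linarith)]
    nlinarith

end ExpPos

/-- There exist universal constants `C ≥ c > 0` such that for all `b, q ∈ [0,∞)`:
`c^{1+q} · min{1+q, b}^{1+q} ≤ ∫_0^b e^{-ω} ω^q dω ≤ C^{1+q} · min{1+q, b}^{1+q}` and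
`c · e^b · b^{1+q}/(1+q+b) ≤ ∫_0^b e^{ω} ω^q dω ≤ C · e^b · b^{1+q}/(1+q+b)`. -/
theorem incomplete_gamma_bounds :
    ∃ C c : ℝ, 0 < c ∧ c ≤ C ∧
      ∀ b q : ℝ, 0 ≤ b → 0 ≤ q →
        (c ^ (1 + q) * min (1 + q) b ^ (1 + q) ≤
            ∫ ω in Set.Icc (0 : ℝ) b, Real.exp (-ω) * ω ^ q ∧
         (∫ ω in Set.Icc (0 : ℝ) b, Real.exp (-ω) * ω ^ q) ≤
            C ^ (1 + q) * min (1 + q) b ^ (1 + q)) ∧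
        (c * Real.exp b * b ^ (1 + q) / (1 + q + b) ≤
            ∫ ω in Set.Icc (0 : ℝ) b, Real.exp ω * ω ^ q ∧
         (∫ ω in Set.Icc (0 : ℝ) b, Real.exp ω * ω ^ q) ≤
            C * Real.exp b * b ^ (1 + q) / (1 + q + b)) := by
  have hc : exp (-2) ≤ 1 := exp_le_one_iff.mpr (by norm_num)
  refine ⟨2, exp (-2), exp_pos _, by linarith, fun b q hb hq => ⟨⟨?_, ?_⟩, ?_, ?_⟩⟩
  · exact exp_neg_two_rpow_mul_le_setIntegral hb hq
  · exact setIntegral_exp_neg_mul_rpow_le hb hq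
  · refine le_trans ?_ (exp_mul_rpow_div_le_setIntegral hb hq)
    rw [mul_assoc, mul_div_assoc]
    exact mul_le_of_le_one_left (by positivity) hc
  · exact setIntegral_exp_mul_rpow_le hb hq
end

section
/- There exist universal constants C ≥ c > 0 such that for all (a, T) ∈ ℝ × [1,∞): c·(1 + T^{1-a})/(1 + |1-a|·ln T)·ln T ≤ ∫_1^T x^{-a} dx ≤ C·(1 + T^{1-a})/(1 + |1-a|·ln T)·ln T. -/
/-!
With `L = log T` and `u = (1 - a) L`, the integral equals `L (exp u - 1) / u` (or `L` when
`u = 0`), and `(exp u - 1) / u` agrees with `(1 + exp u) / (1 + |u|)` up to a factor `2` either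
way, so `c = 1 / 2` and `C = 2` work.
-/

open MeasureTheory Real

lemma one_sub_mul_exp_le_one (u : ℝ) : (1 - u) * exp u ≤ 1 := by
  calc (1 - u) * exp u ≤ exp (-u) * exp u := by gcongr; linarith [add_one_le_exp (-u)]
    _ = 1 := by rw [← exp_add, neg_add_cancel, exp_zero]

/- Both bounds below reduce, after clearing denominators, to `1 + u ≤ exp u` and
`(1 - u) * exp u ≤ 1`. -/
lemma one_add_exp_div_le_two_mul_exp_sub_one_div {u : ℝ} (hu : u ≠ 0) :
    (1 + exp u) / (1 + |u|) ≤ 2 * ((exp u - 1) / u) := by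
  have h₁ := add_one_le_exp u
  have h₂ := one_sub_mul_exp_le_one u
  rcases hu.lt_or_gt with hneg | hpos
  · rw [abs_of_neg hneg, ← neg_div_neg_eq (exp u - 1), mul_div_assoc',
      div_le_div_iff₀ (by linarith) (by linarith)]
    nlinarith
  · rw [abs_of_pos hpos, mul_div_assoc', div_le_div_iff₀ (by linarith) hpos]
    nlinarith [sq_nonneg u]

lemma exp_sub_one_div_le_two_mul_one_add_exp_div {u : ℝ} (hu : u ≠ 0) :
    (exp u - 1) / u ≤ 2 * ((1 + exp u) / (1 + |u|)) := by
  have h₁ := add_one_le_exp u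
  have h₂ := one_sub_mul_exp_le_one u
  rcases hu.lt_or_gt with hneg | hpos
  · rw [abs_of_neg hneg, ← neg_div_neg_eq (exp u - 1), mul_div_assoc',
      div_le_div_iff₀ (by linarith) (by linarith)]
    nlinarith [mul_pos (exp_pos u) (neg_pos.2 hneg)]
  · rw [abs_of_pos hpos, mul_div_assoc', div_le_div_iff₀ hpos (by linarith)]
    nlinarith

lemma integral_Icc_one_rpow_neg_of_ne_one {a T : ℝ} (hT : 1 ≤ T) (ha : a ≠ 1) :
    ∫ x in Set.Icc (1 : ℝ) T, x ^ (-a) = (T ^ (1 - a) - 1) / (1 - a) := by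
  have hne : -a ≠ -1 := by simpa using ha
  have hzero : (0 : ℝ) ∉ Set.uIcc 1 T := by
    rw [Set.uIcc_of_le hT]; exact fun h => absurd h.1 (by norm_num)
  rw [integral_Icc_eq_integral_Ioc, ← intervalIntegral.integral_of_le hT,
    integral_rpow (Or.inr ⟨hne, hzero⟩), one_rpow]
  ring_nf

lemma integral_Icc_one_rpow_neg_one {T : ℝ} (hT : 1 ≤ T) :
    ∫ x in Set.Icc (1 : ℝ) T, x ^ (-1 : ℝ) = log T := by
  simp_rw [rpow_neg_one]
  rw [integral_Icc_eq_integral_Ioc, ← intervalIntegral.integral_of_le hT,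
    integral_inv_of_pos one_pos (by linarith), div_one]

/-- There exist universal constants `C ≥ c > 0` such that for all `(a, T) ∈ ℝ × [1,∞)`:
`c (1+T^{1-a})/(1+|1-a| ln T) · ln T ≤ ∫_1^T x^{-a} dx ≤ C (1+T^{1-a})/(1+|1-a| ln T) · ln T`. -/
theorem basic_power_integral_bounds :
    ∃ C c : ℝ, 0 < c ∧ c ≤ C ∧
      ∀ a T : ℝ, 1 ≤ T →
        c * ((1 + T ^ (1 - a)) / (1 + |1 - a| * Real.log T)) * Real.log T ≤
            (∫ x in Set.Icc (1 : ℝ) T, x ^ (-a)) ∧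
          (∫ x in Set.Icc (1 : ℝ) T, x ^ (-a)) ≤
            C * ((1 + T ^ (1 - a)) / (1 + |1 - a| * Real.log T)) * Real.log T := by
  refine ⟨2, 1 / 2, by norm_num, by norm_num, fun a T hT => ?_⟩
  rcases hT.eq_or_lt with rfl | hT₁
  · simp
  have hL : 0 < log T := log_pos hT₁
  by_cases ha : a = 1
  · subst ha
    rw [integral_Icc_one_rpow_neg_one hT]
    norm_num
    linarith
  set u := (1 - a) * log T with hu_def
  have hu : u ≠ 0 := mul_ne_zero (sub_ne_zero.2 (Ne.symm ha)) hL.ne'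
  have hpow : T ^ (1 - a) = exp u := by rw [rpow_def_of_pos (by linarith), mul_comm]
  have habs : |1 - a| * log T = |u| := by rw [abs_mul, abs_of_pos hL]
  have hint : ∫ x in Set.Icc (1 : ℝ) T, x ^ (-a) = (exp u - 1) / u * log T := by
    rw [integral_Icc_one_rpow_neg_of_ne_one hT ha, hpow, hu_def]
    field_simp
  rw [hint, hpow, habs]
  constructor
  · linarith [mul_le_mul_of_nonneg_right (one_add_exp_div_le_two_mul_exp_sub_one_div hu) hL.le]
  · exact mul_le_mul_of_nonneg_right (exp_sub_one_div_le_two_mul_one_add_exp_div hu) hL.le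
end

section
/- There exist universal constants C, c > 0 such that for every integer n ≥ 3, every t ≥ 0, and X a random vector in ℝ^n with the standard normal distribution N(0, I_n), with probability at least 1 − C·exp(−t²) the following event occurs: for every integer i with 1 ≤ i ≤ (n+1)/2, X_[i] ≤ C·(ln(n/i) + t²/i)^{1/2}. -/
open MeasureTheory ProbabilityTheory

/-- `decRe x` is the non-increasing rearrangement of `(|x_1|, …, |x_n|)`
(indexed from `0`, so `decRe x i = x_[i+1]` in the paper's notation). -/
noncomputable def decRe {n : ℕ} (x : Fin n → ℝ) : Fin n → ℝ :=
  fun i => |x (Tuple.sort (fun j => |x j|) i.rev)|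

/-- The standard Gaussian measure `N(0, I_n)` on `ℝ^n`. -/
noncomputable def stdGaussian (n : ℕ) : Measure (Fin n → ℝ) :=
  Measure.pi fun _ => gaussianReal 0 1

/-!
If `X_[i] > r`, then at least `i` coordinates of `X` exceed `r` in absolute value. A union bound
over the `n.choose i` index sets and independence give `P(X_[i] > r) ≤ (n.choose i) P(|g| > r)^i`,
and the Chernoff bound gives `P(|g| > r) ≤ 2 exp(-r²/2)`. For `r = 6 √(log(n/i) + t²/i)` this is
at most `2⁻ⁱ exp(-18 t²)`, and summing over `i` bounds the probability of the bad event by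
`exp(-18 t²)`.
-/

open Finset Real
open scoped NNReal

section ProductMeasure

variable {ι Ω : Type*} [Fintype ι] [MeasurableSpace Ω] (μ : Measure Ω)
  [IsProbabilityMeasure μ]

lemma measureReal_pi_forall_mem (S : Finset ι) (A : Set Ω) :
    (Measure.pi fun _ : ι => μ).real {x | ∀ j ∈ S, x j ∈ A} = μ.real A ^ #S := by
  change (Measure.pi fun _ : ι => μ).real ((S : Set ι).pi fun _ => A) = _
  rw [measureReal_def, Measure.pi_pi_finset, prod_const, ENNReal.toReal_pow, measureReal_def]

lemma measureReal_pi_exists_card_eq_le (k : ℕ) (A : Set Ω) :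
    (Measure.pi fun _ : ι => μ).real {x | ∃ S : Finset ι, #S = k ∧ ∀ j ∈ S, x j ∈ A} ≤
      (Fintype.card ι).choose k * μ.real A ^ k := by
  have hunion : {x : ι → Ω | ∃ S : Finset ι, #S = k ∧ ∀ j ∈ S, x j ∈ A} =
      ⋃ S ∈ powersetCard k univ, {x | ∀ j ∈ S, x j ∈ A} := by
    ext x; simp
  rw [hunion]
  refine (measureReal_biUnion_finset_le _ _).trans_eq ?_
  rw [sum_congr rfl fun S hS => by rw [measureReal_pi_forall_mem, (mem_powersetCard.mp hS).2],
    sum_const, card_powersetCard, card_univ, nsmul_eq_mul]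

end ProductMeasure

lemma ProbabilityTheory.HasSubgaussianMGF.measureReal_lt_abs_le {Ω : Type*}
    [MeasurableSpace Ω] {μ : Measure Ω} [IsFiniteMeasure μ] {X : Ω → ℝ} {c : ℝ≥0}
    (h : HasSubgaussianMGF X c μ) {ε : ℝ} (hε : 0 ≤ ε) :
    μ.real {ω | ε < |X ω|} ≤ 2 * exp (-ε ^ 2 / (2 * c)) := by
  have hsub : {ω | ε < |X ω|} ⊆ {ω | ε ≤ X ω} ∪ {ω | ε ≤ (-X) ω} :=
    fun ω (hω : ε < |X ω|) => by
      rcases lt_abs.mp hω with h | h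
      exacts [Or.inl h.le, Or.inr h.le]
  calc μ.real {ω | ε < |X ω|} ≤ μ.real {ω | ε ≤ X ω} + μ.real {ω | ε ≤ (-X) ω} :=
        (measureReal_mono hsub).trans (measureReal_union_le _ _)
    _ ≤ _ := by linarith [h.measure_ge_le hε, h.neg.measure_ge_le hε]

lemma hasSubgaussianMGF_id_gaussianReal (v : ℝ≥0) : HasSubgaussianMGF id v (gaussianReal 0 v) :=
  ⟨integrable_exp_mul_gaussianReal, fun t => by simp [mgf_id_gaussianReal]⟩

lemma exists_card_eq_lt_abs_of_lt_decRe {n : ℕ} {x : Fin n → ℝ} {i : Fin n} {r : ℝ}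
    (h : r < decRe x i) : ∃ S : Finset (Fin n), #S = i + 1 ∧ ∀ j ∈ S, r < |x j| := by
  set σ := Tuple.sort fun j => |x j|
  refine ⟨(Iic i).image fun a => σ a.rev, ?_, ?_⟩
  · rw [card_image_of_injective _ fun a b hab => Fin.rev_injective (σ.injective hab),
      Fin.card_Iic]
  · simp only [mem_image, mem_Iic, forall_exists_index, and_imp]
    rintro _ a ha rfl
    exact h.trans_le (Tuple.monotone_sort (fun j => |x j|) (Fin.rev_le_rev.mpr ha))

lemma choose_le_exp_one_mul_div_pow (n k : ℕ) : (n.choose k : ℝ) ≤ (exp 1 * n / k) ^ k := by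
  rcases k.eq_zero_or_pos with rfl | hk
  · simp
  have hk' : (0 : ℝ) < k := by exact_mod_cast hk
  calc (n.choose k : ℝ) ≤ n ^ k / k.factorial := Nat.choose_le_pow_div k n
    _ = (n / k) ^ k * (k ^ k / k.factorial) := by rw [div_pow]; field_simp
    _ ≤ (n / k) ^ k * exp k := by gcongr; exact Real.pow_div_factorial_le_exp _ hk'.le k
    _ = (exp 1 * n / k) ^ k := by rw [← exp_one_pow, mul_div_assoc, mul_pow, mul_comm]

lemma two_mul_exp_one_mul_pow_le {q : ℝ} (hq₀ : 0 ≤ q) (hq : q ≤ 2 / 3) :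
    2 * exp 1 * q ^ 17 ≤ 1 / 2 := by
  calc 2 * exp 1 * q ^ 17 ≤ 2 * 2.7182818286 * (2 / 3) ^ 17 := by
        gcongr; exact exp_one_lt_d9.le
    _ ≤ 1 / 2 := by norm_num

/-- With `q = k / n`, the Gaussian factor is `q ^ 18 * exp (-18 t² / k)`: one power of `q`
cancels the `(e / q) ^ k` bound on the binomial coefficient, and `2 e q ^ 17 ≤ 1 / 2`
since `q ≤ 2 / 3`. -/
lemma choose_mul_two_exp_neg_sq_le {n k : ℕ} (t : ℝ) (hk : 1 ≤ k) (hkn : 3 * k ≤ 2 * n) :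
    n.choose k * (2 * exp (-(6 * √(log (n / k) + t ^ 2 / k)) ^ 2 / 2)) ^ k ≤
      (1 / 2) ^ k * exp (-(18 * t ^ 2)) := by
  have hk₀ : (0 : ℝ) < k := by exact_mod_cast hk
  have hkn' : (3 : ℝ) * k ≤ 2 * n := by exact_mod_cast hkn
  have hn₀ : (0 : ℝ) < n := by linarith
  set q : ℝ := k / n
  have hq₀ : 0 < q := by positivity
  have hq : q ≤ 2 / 3 := by rw [div_le_iff₀ hn₀]; linarith
  have hlog : 0 ≤ log (n / k) := log_nonneg (by rw [le_div_iff₀ hk₀]; linarith)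
  have htail : exp (-(6 * √(log (n / k) + t ^ 2 / k)) ^ 2 / 2) =
      q ^ 18 * exp (-(18 * t ^ 2) / k) := by
    rw [mul_pow, sq_sqrt (by positivity), show -((6 : ℝ) ^ 2 * (log (n / k) + t ^ 2 / k)) / 2 =
      -(18 : ℕ) * log (n / k) + -(18 * t ^ 2) / k by push_cast; ring, exp_add, neg_mul,
      exp_neg, exp_nat_mul, exp_log (by positivity), ← inv_pow, inv_div]
  have hpow : (2 * (q ^ 18 * exp (-(18 * t ^ 2) / k))) ^ k =
      (2 * q ^ 18) ^ k * exp (-(18 * t ^ 2)) := by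
    rw [← mul_assoc, mul_pow, ← exp_nat_mul, mul_div_cancel₀ _ hk₀.ne']
  have hchoose : (n.choose k : ℝ) ≤ (exp 1 / q) ^ k := by
    simpa only [q, div_div_eq_mul_div] using choose_le_exp_one_mul_div_pow n k
  rw [htail, hpow, ← mul_assoc, mul_comm _ (exp _), mul_comm ((1 / 2) ^ k)]
  gcongr
  calc (n.choose k : ℝ) * (2 * q ^ 18) ^ k ≤ (exp 1 / q) ^ k * (2 * q ^ 18) ^ k := by gcongr
    _ = (2 * exp 1 * q ^ 17) ^ k := by rw [← mul_pow]; congr 1; field_simp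
    _ ≤ (1 / 2) ^ k := by gcongr; exact two_mul_exp_one_mul_pow_le hq₀.le hq

lemma sum_half_pow_succ_le {n : ℕ} (s : Finset (Fin n)) :
    ∑ i ∈ s, (1 / 2 : ℝ) ^ ((i : ℕ) + 1) ≤ 1 :=
  calc ∑ i ∈ s, (1 / 2 : ℝ) ^ ((i : ℕ) + 1)
      ≤ ∑ i : Fin n, (1 / 2 : ℝ) ^ ((i : ℕ) + 1) :=
        sum_le_sum_of_subset_of_nonneg (subset_univ s) fun _ _ _ => by positivity
    _ = ∑ i ∈ range n, (1 / 2 : ℝ) ^ (i + 1) :=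
        Fin.sum_univ_eq_sum_range (fun i => (1 / 2 : ℝ) ^ (i + 1)) n
    _ ≤ 1 := by
        simp_rw [pow_succ, ← sum_mul]
        linarith [sum_geometric_two_le n]

instance (n : ℕ) : IsProbabilityMeasure (stdGaussian n) :=
  Measure.pi.instIsProbabilityMeasure _

lemma stdGaussian_real_lt_decRe_le {n : ℕ} (i : Fin n) {r : ℝ} (hr : 0 ≤ r) :
    (stdGaussian n).real {x | r < decRe x i} ≤
      n.choose ((i : ℕ) + 1) * (2 * exp (-r ^ 2 / 2)) ^ ((i : ℕ) + 1) := by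
  have htail : (gaussianReal 0 1).real {y | r < |y|} ≤ 2 * exp (-r ^ 2 / 2) := by
    simpa using (hasSubgaussianMGF_id_gaussianReal 1).measureReal_lt_abs_le hr
  have hunion := measureReal_pi_exists_card_eq_le (ι := Fin n) (gaussianReal 0 1)
    ((i : ℕ) + 1) {y | r < |y|}
  rw [Fintype.card_fin] at hunion
  calc (stdGaussian n).real {x | r < decRe x i}
      ≤ (stdGaussian n).real
          {x | ∃ S : Finset (Fin n), #S = (i : ℕ) + 1 ∧ ∀ j ∈ S, x j ∈ {y | r < |y|}} :=
        measureReal_mono fun x hx => exists_card_eq_lt_abs_of_lt_decRe hx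
    _ ≤ n.choose ((i : ℕ) + 1) * (gaussianReal 0 1).real {y | r < |y|} ^ ((i : ℕ) + 1) :=
        hunion
    _ ≤ _ := by gcongr

lemma stdGaussian_real_biUnion_lt_decRe_le {n : ℕ} (hn : 3 ≤ n) (t : ℝ) :
    (stdGaussian n).real (⋃ i ∈ univ.filter fun i : Fin n => (i : ℝ) + 1 ≤ (n + 1) / 2,
      {x | 6 * √(log (n / (i + 1 : ℕ)) + t ^ 2 / (i + 1 : ℕ)) < decRe x i}) ≤
      exp (-(18 * t ^ 2)) :=
  calc _ ≤ ∑ i ∈ univ.filter fun i : Fin n => (i : ℝ) + 1 ≤ (n + 1) / 2,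
        (stdGaussian n).real
          {x | 6 * √(log (n / (i + 1 : ℕ)) + t ^ 2 / (i + 1 : ℕ)) < decRe x i} :=
        measureReal_biUnion_finset_le _ _
    _ ≤ ∑ i ∈ univ.filter fun i : Fin n => (i : ℝ) + 1 ≤ (n + 1) / 2,
        (1 / 2) ^ ((i : ℕ) + 1) * exp (-(18 * t ^ 2)) := by
        refine sum_le_sum fun i hi => (stdGaussian_real_lt_decRe_le i (by positivity)).trans ?_
        have hi : ((i : ℕ) + 1 : ℝ) ≤ (n + 1) / 2 := (mem_filter.mp hi).2
        have hi' : 2 * ((i : ℕ) + 1) ≤ n + 1 := by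
          exact_mod_cast (by linarith : 2 * ((i : ℕ) + 1 : ℝ) ≤ n + 1)
        exact choose_mul_two_exp_neg_sq_le t (by omega) (by omega)
    _ ≤ exp (-(18 * t ^ 2)) := by
        rw [← sum_mul]
        exact mul_le_of_le_one_left (exp_pos _).le (sum_half_pow_succ_le _)

/-- There exists a universal constant `C > 0` such that for every `n ≥ 3`, `t ≥ 0` and
`X` standard Gaussian in `ℝ^n`, with probability at least `1 - C exp(-t²)` one has
`X_[i] ≤ C (ln(n/i) + t²/i)^{1/2}` for all `1 ≤ i ≤ (n+1)/2`. -/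
theorem order_statistics_upper_bound :
    ∃ C : ℝ, 0 < C ∧
      ∀ (n : ℕ) (t : ℝ), 3 ≤ n → 0 ≤ t →
        1 - C * Real.exp (-t ^ 2) ≤
          ((stdGaussian n) {x | ∀ i : Fin n, ((i : ℝ) + 1) ≤ ((n : ℝ) + 1) / 2 →
            decRe x i ≤
              C * (Real.log ((n : ℝ) / ((i : ℝ) + 1)) + t ^ 2 / ((i : ℝ) + 1)) ^ ((1 : ℝ) / 2)}).toReal := by
  refine ⟨6, by norm_num, fun n t hn ht => ?_⟩
  set U := ⋃ i ∈ univ.filter fun i : Fin n => (i : ℝ) + 1 ≤ (n + 1) / 2,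
    {x | 6 * √(log (n / (i + 1 : ℕ)) + t ^ 2 / (i + 1 : ℕ)) < decRe x i}
  have hbad : (stdGaussian n).real U ≤ exp (-(18 * t ^ 2)) :=
    stdGaussian_real_biUnion_lt_decRe_le hn t
  have hgood : Uᶜ ⊆ {x | ∀ i : Fin n, ((i : ℝ) + 1) ≤ ((n : ℝ) + 1) / 2 →
      decRe x i ≤ 6 * (log ((n : ℝ) / ((i : ℝ) + 1)) + t ^ 2 / ((i : ℝ) + 1)) ^ ((1 : ℝ) / 2)} := by
    intro x hx i hi
    simp only [U, Set.mem_compl_iff, Set.mem_iUnion, mem_filter, not_exists] at hx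
    simpa [sqrt_eq_rpow] using hx i ⟨mem_univ i, hi⟩
  calc 1 - 6 * exp (-t ^ 2) ≤ 1 - (stdGaussian n).real U := by
        have : exp (-(18 * t ^ 2)) ≤ exp (-t ^ 2) := exp_le_exp.mpr (by nlinarith)
        linarith [exp_pos (-t ^ 2)]
    _ ≤ (stdGaussian n).real Uᶜ := by
        have := measureReal_union_le (μ := stdGaussian n) U Uᶜ
        rw [Set.union_compl_self, probReal_univ] at this
        linarith
    _ ≤ _ := measureReal_mono hgood
end

section
/- Let ψ : ℝ^n → ℝ, let A ⊆ ℝ^n be a convex set with nonempty interior, and let E denote the set of all x ∈ ℝ^n whose coordinates are pairwise distinct and all non-zero. Assume ψ is continuous on A and differentiable at every point of A ∩ E. Then, as elements of [0,∞], Lip(ψ|_A) = sup_{x ∈ A ∩ E} |∇ψ(x)|. -/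
/-!
For `p ∈ A` where `ψ` is differentiable, the derivative in a direction `v` is bounded by the
Lipschitz constant even when `p` lies on the boundary of `A`: pick `z` in the interior and compare
`ψ` along the rays from `p` through `z` and through `z + v`; both stay in `A`, and their difference
is `t • v` at time `t`.

Conversely, `E` is the complement of finitely many hyperplanes, so a segment whose direction lies
in `E` meets `Eᶜ` only finitely often, and the mean value theorem on the pieces bounds the
increment of `ψ` along it. From a fixed `x ∈ A`, the endpoints of such segments are dense in `A`
because `A` has nonempty interior, and continuity of `ψ` on `A` gives the bound for all pairs.
-/

open scoped ENNReal NNReal Topology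
open Set Filter

theorem abs_sub_le_mul_of_hasDerivAt_off_finite {f f' : ℝ → ℝ} {C a b : ℝ} {S : Set ℝ}
    (hS : S.Finite) (hab : a ≤ b) (hf : ContinuousOn f (Icc a b))
    (hf' : ∀ t ∈ Ioo a b \ S, HasDerivAt f (f' t) t) (hC : ∀ t ∈ Ioo a b \ S, |f' t| ≤ C) :
    |f b - f a| ≤ C * (b - a) := by
  induction S, hS using Set.Finite.induction_on generalizing a b with
  | empty =>
    rcases hab.eq_or_lt with rfl | hab
    · simp
    obtain ⟨c, hc, hslope⟩ := exists_hasDerivAt_eq_slope f f' hab hf fun t ht ↦ hf' t ⟨ht, id⟩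
    have hba : 0 < b - a := sub_pos.2 hab
    calc |f b - f a| = |f' c| * (b - a) := by
          rw [hslope, abs_div, abs_of_pos hba, div_mul_cancel₀ _ hba.ne']
      _ ≤ C * (b - a) := by gcongr; exact hC c ⟨hc, id⟩
  | @insert s S _ _ ih =>
    have restrict : ∀ {a' b'}, a ≤ a' → b' ≤ b → s ∉ Ioo a' b' →
        Ioo a' b' \ S ⊆ Ioo a b \ insert s S := fun ha hb hs t ht ↦
      ⟨⟨ha.trans_lt ht.1.1, ht.1.2.trans_le hb⟩, fun h ↦ h.elim (fun h ↦ hs (h ▸ ht.1)) ht.2⟩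
    by_cases hs : s ∈ Ioo a b
    · have hsb := ih hs.2.le (hf.mono (Icc_subset_Icc_left hs.1.le))
        (fun t ht ↦ hf' t (restrict hs.1.le le_rfl (fun h ↦ h.1.false) ht))
        (fun t ht ↦ hC t (restrict hs.1.le le_rfl (fun h ↦ h.1.false) ht))
      have has := ih hs.1.le (hf.mono (Icc_subset_Icc_right hs.2.le))
        (fun t ht ↦ hf' t (restrict le_rfl hs.2.le (fun h ↦ h.2.false) ht))
        (fun t ht ↦ hC t (restrict le_rfl hs.2.le (fun h ↦ h.2.false) ht))
      calc |f b - f a| ≤ |f b - f s| + |f s - f a| := abs_sub_le _ _ _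
        _ ≤ C * (b - s) + C * (s - a) := add_le_add hsb has
        _ = C * (b - a) := by ring
    · exact ih hab hf (fun t ht ↦ hf' t (restrict le_rfl le_rfl hs ht))
        (fun t ht ↦ hC t (restrict le_rfl le_rfl hs ht))

theorem finite_setOf_add_smul_notMem_setOf_forall_ne_zero {F ι : Type*} [AddCommGroup F]
    [Module ℝ F] [Finite ι] (ℓ : ι → Module.Dual ℝ F) (x : F) {v : F} (hv : ∀ k, ℓ k v ≠ 0) :
    {t : ℝ | x + t • v ∉ {y | ∀ k, ℓ k y ≠ 0}}.Finite := by
  refine (finite_iUnion fun k ↦ finite_singleton (-ℓ k x / ℓ k v)).subset fun t ht ↦ ?_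
  simp only [mem_ofPred_eq, not_forall, not_not, map_add, map_smul, smul_eq_mul] at ht
  obtain ⟨k, hk⟩ := ht
  exact mem_iUnion.2 ⟨k, by rw [mem_singleton_iff, eq_div_iff (hv k)]; linarith⟩

section TopologicalVectorSpace

variable {F : Type*} [AddCommGroup F] [Module ℝ F] [TopologicalSpace F]
  [IsTopologicalAddGroup F] [ContinuousSMul ℝ F]

theorem dense_of_finite_setOf_add_smul_notMem {E : Set F} {v : F}
    (h : ∀ x, {t : ℝ | x + t • v ∉ E}.Finite) : Dense E := fun x ↦ by
  refine mem_closure_of_tendsto (b := 𝓝[≠] (0 : ℝ)) (f := fun t ↦ x + t • v) ?_ ?_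
  · have : Continuous fun t : ℝ ↦ x + t • v := by fun_prop
    simpa using (this.tendsto 0).mono_left nhdsWithin_le_nhds
  · filter_upwards [nhdsNE_le_cofinite (0 : ℝ) (h x).compl_mem_cofinite] with t ht
    simpa using ht

theorem Convex.subset_closure_inter_of_dense {A U : Set F} (hA : Convex ℝ A)
    (hint : (interior A).Nonempty) (hU : Dense U) : A ⊆ closure (A ∩ U) := by
  have : interior A ⊆ closure (interior A ∩ U) := fun x hx ↦
    isOpen_interior.inter_closure ⟨hx, hU x⟩
  calc A ⊆ closure (interior A) := by
        rw [hA.closure_interior_eq_closure_of_nonempty_interior hint]; exact subset_closure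
    _ ⊆ closure (interior A ∩ U) := closure_minimal this isClosed_closure
    _ ⊆ closure (A ∩ U) := closure_mono (inter_subset_inter_left _ interior_subset)

end TopologicalVectorSpace

theorem hasDerivAt_const_add_smul {F : Type*} [NormedAddCommGroup F] [NormedSpace ℝ F]
    (x u : F) (t : ℝ) : HasDerivAt (fun t : ℝ ↦ x + t • u) u t := by
  simpa using ((hasDerivAt_id t).smul_const u).const_add x

theorem HasDerivAt.norm_le_of_norm_le_mul {G : Type*} [NormedAddCommGroup G] [NormedSpace ℝ G]
    {h : ℝ → G} {h' : G} {c : ℝ} (hh : HasDerivAt h h' 0) (h0 : h 0 = 0)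
    (hc : ∀ᶠ t in 𝓝[>] 0, ‖h t‖ ≤ c * t) : ‖h'‖ ≤ c := by
  refine le_of_tendsto hh.tendsto_slope_zero_right.norm ?_
  filter_upwards [hc, self_mem_nhdsWithin] with t ht (htpos : 0 < t)
  rw [zero_add, h0, sub_zero, norm_smul, norm_inv, Real.norm_of_nonneg htpos.le,
    inv_mul_le_iff₀ htpos, mul_comm]
  exact ht

section NormedSpace

variable {F : Type*} [NormedAddCommGroup F] [NormedSpace ℝ F]

theorem HasFDerivAt.le_of_lipschitzOn_of_convex {G : Type*} [NormedAddCommGroup G]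
    [NormedSpace ℝ G] {f : F → G} {f' : F →L[ℝ] G} {x₀ : F} {s : Set F} {C : ℝ≥0}
    (hf : HasFDerivAt f f' x₀) (hs : Convex ℝ s) (hint : (interior s).Nonempty) (hx₀ : x₀ ∈ s)
    (hlip : LipschitzOnWith C f s) : ‖f'‖ ≤ C := by
  obtain ⟨z, hz⟩ := hint
  obtain ⟨r, hr, hball⟩ := Metric.isOpen_iff.1 isOpen_interior z hz
  refine f'.opNorm_le_of_ball hr C.2 fun v hv ↦ ?_
  have hzv : z + v ∈ s := interior_subset (hball (by simpa using hv))
  have hdir : z + v - x₀ - (z - x₀) = v := by abel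
  let h (t : ℝ) := f (x₀ + t • (z + v - x₀)) - f (x₀ + t • (z - x₀))
  have hderiv : HasDerivAt h (f' v) 0 := by
    have := (hf.comp_hasDerivAt_of_eq 0 (hasDerivAt_const_add_smul x₀ (z + v - x₀) 0)
      (by simp)).sub (hf.comp_hasDerivAt_of_eq 0 (hasDerivAt_const_add_smul x₀ (z - x₀) 0)
      (by simp))
    rwa [← map_sub, hdir] at this
  refine hderiv.norm_le_of_norm_le_mul (by simp [h]) ?_
  filter_upwards [Ioc_mem_nhdsGT one_pos] with t ht
  have hmem : ∀ w ∈ s, x₀ + t • (w - x₀) ∈ s := fun w hw ↦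
    hs.add_smul_sub_mem hx₀ hw (Ioc_subset_Icc_self ht)
  calc ‖h t‖ ≤ C * ‖x₀ + t • (z + v - x₀) - (x₀ + t • (z - x₀))‖ :=
        hlip.norm_sub_le (hmem _ hzv) (hmem _ (interior_subset (hball (Metric.mem_ball_self hr))))
    _ = C * ‖v‖ * t := by
        rw [add_sub_add_left_eq_sub, ← smul_sub, hdir, norm_smul, Real.norm_of_nonneg ht.1.le]
        ring

variable {ψ : F → ℝ} {A E : Set F}

theorem Convex.abs_sub_le_of_finite_setOf_notMem {K : ℝ} (hA : Convex ℝ A)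
    (hcont : ContinuousOn ψ A) (hdiff : ∀ x ∈ A ∩ E, DifferentiableAt ℝ ψ x)
    (hK : ∀ x ∈ A ∩ E, ‖fderiv ℝ ψ x‖ ≤ K) {x y : F} (hx : x ∈ A) (hy : y ∈ A)
    (hfin : {t : ℝ | x + t • (y - x) ∉ E}.Finite) : |ψ y - ψ x| ≤ K * ‖y - x‖ := by
  let γ (t : ℝ) : F := x + t • (y - x)
  have hγA : MapsTo γ (Icc 0 1) A := fun t ht ↦ hA.add_smul_sub_mem hx hy ht
  have hgood : ∀ t ∈ Ioo (0 : ℝ) 1 \ {t | γ t ∉ E}, γ t ∈ A ∩ E := fun t ht ↦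
    ⟨hγA (Ioo_subset_Icc_self ht.1), not_not.1 ht.2⟩
  have := abs_sub_le_mul_of_hasDerivAt_off_finite (f := ψ ∘ γ)
    (f' := fun t ↦ fderiv ℝ ψ (γ t) (y - x)) hfin zero_le_one
    (hcont.comp (by fun_prop) hγA)
    (fun t ht ↦ (hdiff _ (hgood t ht)).hasFDerivAt.comp_hasDerivAt t
      (hasDerivAt_const_add_smul x (y - x) t))
    (fun t ht ↦ by
      simpa only [← Real.norm_eq_abs] using ((fderiv ℝ ψ (γ t)).le_opNorm _).trans
        (mul_le_mul_of_nonneg_right (hK _ (hgood t ht)) (norm_nonneg _)))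
  simpa [γ] using this

theorem Convex.lipschitzOnWith_of_nnnorm_fderiv_le_on_inter {K : ℝ≥0} (hA : Convex ℝ A)
    (hint : (interior A).Nonempty) (hE : E.Nonempty)
    (hline : ∀ x, ∀ v ∈ E, {t : ℝ | x + t • v ∉ E}.Finite) (hcont : ContinuousOn ψ A)
    (hdiff : ∀ x ∈ A ∩ E, DifferentiableAt ℝ ψ x) (hK : ∀ x ∈ A ∩ E, ‖fderiv ℝ ψ x‖₊ ≤ K) :
    LipschitzOnWith K ψ A := by
  obtain ⟨v, hv⟩ := hE
  refine LipschitzOnWith.of_dist_le_mul fun y hy x hx ↦ ?_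
  have hgood : ∀ y ∈ A ∩ (· - x) ⁻¹' E, dist (ψ y) (ψ x) ≤ K * dist y x := fun y hy ↦ by
    rw [Real.dist_eq, dist_eq_norm]
    exact hA.abs_sub_le_of_finite_setOf_notMem hcont hdiff hK hx hy.1
      (hline x _ hy.2)
  refine ContinuousWithinAt.closure_le (hA.subset_closure_inter_of_dense hint
    ((dense_of_finite_setOf_add_smul_notMem (hline · v hv)).preimage
      (Homeomorph.subRight x).isOpenMap) hy) ?_ ?_ hgood
  · exact ((hcont y hy).dist tendsto_const_nhds).mono_left (nhdsWithin_mono _ inter_subset_left)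
  · exact (continuousWithinAt_id.dist continuousWithinAt_const).const_mul _

end NormedSpace

noncomputable def distinctNonzeroFunctional (n : ℕ) :
    {p : Fin n × Fin n // p.1 ≠ p.2} ⊕ Fin n → Module.Dual ℝ (EuclideanSpace ℝ (Fin n)) :=
  Sum.elim
    (fun p ↦ (EuclideanSpace.proj p.1.1 - EuclideanSpace.proj p.1.2 :
      EuclideanSpace ℝ (Fin n) →L[ℝ] ℝ))
    (fun i ↦ (EuclideanSpace.proj i : EuclideanSpace ℝ (Fin n) →L[ℝ] ℝ))

theorem setOf_distinct_nonzero_eq (n : ℕ) :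
    {x : EuclideanSpace ℝ (Fin n) | (∀ i j : Fin n, i ≠ j → x i ≠ x j) ∧ ∀ i, x i ≠ 0} =
      {x | ∀ k, distinctNonzeroFunctional n k x ≠ 0} := by
  ext x
  simp [distinctNonzeroFunctional, Sum.forall, sub_eq_zero]

theorem nnnorm_gradient {F : Type*} [NormedAddCommGroup F] [InnerProductSpace ℝ F]
    [CompleteSpace F] (f : F → ℝ) (x : F) : ‖gradient f x‖₊ = ‖fderiv ℝ f x‖₊ :=
  (InnerProductSpace.toDual ℝ F).symm.nnnorm_map _

theorem iSup_ofReal_abs_sub_div_dist_le_coe_iff {α : Type*} [MetricSpace α] {f : α → ℝ}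
    {s : Set α} {K : ℝ≥0} :
    (⨆ (x : s) (y : s) (_ : (x : α) ≠ y), ENNReal.ofReal (|f x - f y| / dist (x : α) y)) ≤ K ↔
      LipschitzOnWith K f s := by
  simp only [iSup_le_iff, Subtype.forall, lipschitzOnWith_iff_dist_le_mul, Real.dist_eq]
  refine forall₂_congr fun x _ ↦ forall₂_congr fun y _ ↦ ?_
  rcases eq_or_ne x y with rfl | hxy
  · simp
  rw [ENNReal.ofReal_le_iff_le_toReal ENNReal.coe_ne_top, ENNReal.coe_toReal,
    div_le_iff₀ (dist_pos.2 hxy)]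
  simp [hxy]

/-- Let `ψ : ℝ^n → ℝ`, let `A` be a convex set with nonempty interior, and let `E` be the set
of vectors with pairwise distinct, non-zero coordinates. If `ψ` is continuous on `A` and
differentiable at every point of `A ∩ E`, then, as elements of `[0,∞]`, the Lipschitz constant
of `ψ|_A` (w.r.t. the Euclidean norm) equals `sup_{x ∈ A ∩ E} |∇ψ(x)|`. -/
theorem lipschitz_restriction_eq_sup_gradient {n : ℕ}
    (ψ : EuclideanSpace ℝ (Fin n) → ℝ) (A : Set (EuclideanSpace ℝ (Fin n)))
    (hA : Convex ℝ A) (hint : (interior A).Nonempty)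
    (hcont : ContinuousOn ψ A)
    (hdiff : ∀ x ∈ A ∩ {x : EuclideanSpace ℝ (Fin n) |
        (∀ i j : Fin n, i ≠ j → x i ≠ x j) ∧ ∀ i, x i ≠ 0},
      DifferentiableAt ℝ ψ x) :
    (⨆ (x : A) (y : A) (_ : (x : EuclideanSpace ℝ (Fin n)) ≠ (y : EuclideanSpace ℝ (Fin n))),
        ENNReal.ofReal (|ψ x - ψ y| / dist (x : EuclideanSpace ℝ (Fin n)) (y : EuclideanSpace ℝ (Fin n)))) =
      ⨆ x : (A ∩ {x : EuclideanSpace ℝ (Fin n) |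
          (∀ i j : Fin n, i ≠ j → x i ≠ x j) ∧ ∀ i, x i ≠ 0} : Set (EuclideanSpace ℝ (Fin n))),
        (‖gradient ψ (x : EuclideanSpace ℝ (Fin n))‖₊ : ℝ≥0∞) := by
  have hE : {x : EuclideanSpace ℝ (Fin n) |
      (∀ i j : Fin n, i ≠ j → x i ≠ x j) ∧ ∀ i, x i ≠ 0}.Nonempty :=
    ⟨WithLp.toLp 2 fun i ↦ (i : ℝ) + 1, fun i j hij ↦ by simpa [Fin.val_inj] using hij,
      fun i ↦ Nat.cast_add_one_ne_zero (i : ℕ)⟩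
  rw [setOf_distinct_nonzero_eq] at hdiff hE ⊢
  refine ENNReal.eq_of_forall_le_nnreal_iff fun K ↦ ?_
  rw [iSup_ofReal_abs_sub_div_dist_le_coe_iff]
  simp only [iSup_le_iff, Subtype.forall, ENNReal.coe_le_coe, nnnorm_gradient]
  constructor
  · intro hlip x hx
    exact (hdiff x hx).hasFDerivAt.le_of_lipschitzOn_of_convex hA hint hx.1 hlip
  · exact hA.lipschitzOnWith_of_nnnorm_fderiv_le_on_inter hint hE
      (fun x v hv ↦ finite_setOf_add_smul_notMem_setOf_forall_ne_zero _ x hv) hcont hdiff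
end

section
/- There exists a universal constant C > 0 such that the following holds (Case IVb). Let n ≥ 3, t > 0, r ∈ (1/4,1/2], p = 2(1−r), assume (1−2r)·ln n < e, and let X be a random vector in ℝ^n with the standard normal distribution. Then: (i) for every x ∈ ℝ^n, ∑_{i=1}^{n} i^{-2r}·x_[i]^{2(p-1)} ≤ C·(ln n)·|x|^{2(p-1)}, where |·| is the Euclidean norm; (ii) with probability at least 1 − C·exp(−t²/2), |X| ≤ C·n^{1/2} + t, and consequently ∑_{i=1}^{n} i^{-2r}·X_[i]^{2(p-1)} ≤ C·(ln n)·t^{2(p-1)}. -/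
/-!
Each `x_[i]` is at most `|x|`, and the exponent `2(p-1) = 2(1-2r)` lies in `[0, 1)`, so the
weighted sum is at most `|x|^{2(p-1)} ∑ i^{-2r} ≤ |x|^{2(p-1)} n^{1-2r} H_n`; the hypothesis
`(1-2r) ln n < e` says exactly that `n^{1-2r} ≤ e^e`, and `H_n ≤ 1 + ln n ≤ 2 ln n`.

For (ii), a Chernoff bound with the exponential moment `E e^{c|X|²} = (1-2c)^{-n/2}` gives
`P(|X| > √n + t) ≤ e^{-t²/2}`. On the complementary event, subadditivity of `u ↦ u^{2(p-1)}`
and `(√n)^{2(p-1)} = n^{1-2r} ≤ e^e` bound `|X|^{2(p-1)}` by `(e^e + 1) t^{2(p-1)}` when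
`t ≥ 1`; for `t ≤ 1` the claimed probability bound is not positive.
-/

open MeasureTheory ProbabilityTheory

/-- The Euclidean norm on `Fin n → ℝ`. -/
noncomputable def eucNorm {n : ℕ} (x : Fin n → ℝ) : ℝ :=
  Real.sqrt (∑ i : Fin n, x i ^ 2)

open Real

lemma rpow_le_exp_of_mul_log_le {x q b : ℝ} (hx : 0 < x) (h : q * log x ≤ b) :
    x ^ q ≤ exp b := by
  rw [rpow_def_of_pos hx, mul_comm]
  exact exp_le_exp.mpr h

lemma one_le_log_of_three_le {n : ℕ} (hn : 3 ≤ n) : 1 ≤ log n := by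
  rw [le_log_iff_exp_le (by positivity)]
  calc exp 1 ≤ 3 := by linarith [exp_one_lt_d9]
    _ ≤ n := by exact_mod_cast hn

lemma add_rpow_le_rpow_add_one_mul {s t a : ℝ} (hs : 0 ≤ s) (ht : 1 ≤ t) (ha0 : 0 ≤ a)
    (ha1 : a ≤ 1) : (s + t) ^ a ≤ (s ^ a + 1) * t ^ a := by
  have hta : 1 ≤ t ^ a := one_le_rpow ht ha0
  calc (s + t) ^ a ≤ s ^ a + t ^ a := rpow_add_le_add_rpow hs (by linarith) ha0 ha1
    _ ≤ s ^ a * t ^ a + t ^ a := by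
      gcongr
      exact le_mul_of_one_le_right (rpow_nonneg hs a) hta
    _ = (s ^ a + 1) * t ^ a := by ring

lemma sum_rpow_sub_one_le_mul_harmonic (n : ℕ) {q : ℝ} (hq : 0 ≤ q) :
    ∑ i : Fin n, ((i : ℝ) + 1) ^ (q - 1) ≤ (n : ℝ) ^ q * harmonic n := by
  have harmonic_eq : (harmonic n : ℝ) = ∑ i : Fin n, ((i : ℝ) + 1)⁻¹ := by
    simp [harmonic, Fin.sum_univ_eq_sum_range (fun k => ((k : ℝ) + 1)⁻¹) n]
  rw [harmonic_eq, Finset.mul_sum]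
  refine Finset.sum_le_sum fun i _ => ?_
  have hi : (0 : ℝ) < i + 1 := by positivity
  rw [rpow_sub hi, rpow_one, div_eq_mul_inv]
  gcongr
  exact_mod_cast i.isLt

lemma sum_rpow_neg_le {n : ℕ} (hn : 3 ≤ n) {r : ℝ} (hr : r ≤ 1 / 2)
    (hlog : (1 - 2 * r) * log n ≤ exp 1) :
    ∑ i : Fin n, ((i : ℝ) + 1) ^ (-(2 * r)) ≤ 2 * exp (exp 1) * log n := by
  have hlogn := one_le_log_of_three_le hn
  calc ∑ i : Fin n, ((i : ℝ) + 1) ^ (-(2 * r))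
      = ∑ i : Fin n, ((i : ℝ) + 1) ^ ((1 - 2 * r) - 1) := by ring_nf
    _ ≤ (n : ℝ) ^ (1 - 2 * r) * harmonic n := sum_rpow_sub_one_le_mul_harmonic n (by linarith)
    _ ≤ exp (exp 1) * (1 + log n) :=
      (mul_le_mul_of_nonneg_left (harmonic_le_one_add_log n) (by positivity)).trans
        (mul_le_mul_of_nonneg_right (rpow_le_exp_of_mul_log_le (by positivity) hlog) (by linarith))
    _ ≤ 2 * exp (exp 1) * log n := by nlinarith [exp_pos (exp 1)]

lemma eucNorm_nonneg {n : ℕ} (x : Fin n → ℝ) : 0 ≤ eucNorm x := sqrt_nonneg _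

lemma decRe_le_eucNorm {n : ℕ} (x : Fin n → ℝ) (i : Fin n) : decRe x i ≤ eucNorm x :=
  abs_le_sqrt (Finset.single_le_sum (fun k _ => sq_nonneg (x k)) (Finset.mem_univ _))

lemma sum_mul_decRe_rpow_le {n : ℕ} {w : Fin n → ℝ} (hw : ∀ i, 0 ≤ w i) {a : ℝ} (ha : 0 ≤ a)
    (x : Fin n → ℝ) : ∑ i, w i * decRe x i ^ a ≤ (∑ i, w i) * eucNorm x ^ a := by
  rw [Finset.sum_mul]
  gcongr with i
  · exact hw i
  · exact abs_nonneg _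
  · exact decRe_le_eucNorm x i

lemma weighted_sum_decRe_rpow_le {n : ℕ} (hn : 3 ≤ n) {r a : ℝ} (hr : r ≤ 1 / 2)
    (hlog : (1 - 2 * r) * log n ≤ exp 1) (ha : 0 ≤ a) (x : Fin n → ℝ) :
    ∑ i : Fin n, ((i : ℝ) + 1) ^ (-(2 * r)) * decRe x i ^ a ≤
      2 * exp (exp 1) * log n * eucNorm x ^ a :=
  (sum_mul_decRe_rpow_le (w := fun i : Fin n => ((i : ℝ) + 1) ^ (-(2 * r)))
    (fun _ => rpow_nonneg (by positivity) _) ha x).trans <|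
    mul_le_mul_of_nonneg_right (sum_rpow_neg_le hn hr hlog) (rpow_nonneg (eucNorm_nonneg x) a)

lemma weighted_sum_decRe_rpow_le_of_eucNorm_le {n : ℕ} (hn : 3 ≤ n) {r a t : ℝ}
    (hr : r ≤ 1 / 2) (hlog : (1 - 2 * r) * log n ≤ exp 1) (ha0 : 0 ≤ a) (ha1 : a ≤ 1)
    (ha_log : a * log n ≤ 2 * exp 1) (ht : 1 ≤ t) {x : Fin n → ℝ}
    (hx : eucNorm x ≤ √n + t) :
    ∑ i : Fin n, ((i : ℝ) + 1) ^ (-(2 * r)) * decRe x i ^ a ≤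
      4 * exp (exp 1) ^ 2 * log n * t ^ a := by
  have hlogn := one_le_log_of_three_le hn
  have hE : 1 ≤ exp (exp 1) := one_le_exp (exp_pos 1).le
  have hsqrt : √(n : ℝ) ^ a ≤ exp (exp 1) := by
    rw [sqrt_eq_rpow, ← rpow_mul (by positivity)]
    exact rpow_le_exp_of_mul_log_le (by positivity) (by linarith)
  have hnorm : eucNorm x ^ a ≤ (exp (exp 1) + 1) * t ^ a :=
    calc eucNorm x ^ a ≤ (√n + t) ^ a := rpow_le_rpow (eucNorm_nonneg x) hx ha0
      _ ≤ (√n ^ a + 1) * t ^ a := add_rpow_le_rpow_add_one_mul (sqrt_nonneg _) ht ha0 ha1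
      _ ≤ (exp (exp 1) + 1) * t ^ a := by gcongr
  calc _ ≤ 2 * exp (exp 1) * log n * eucNorm x ^ a :=
        weighted_sum_decRe_rpow_le hn hr hlog ha0 x
    _ ≤ 2 * exp (exp 1) * log n * ((exp (exp 1) + 1) * t ^ a) := by gcongr
    _ ≤ 4 * exp (exp 1) ^ 2 * log n * t ^ a := by
      have hEE : 2 * exp (exp 1) * (exp (exp 1) + 1) ≤ 4 * exp (exp 1) ^ 2 := by nlinarith
      nlinarith [mul_le_mul_of_nonneg_right hEE (by positivity : 0 ≤ log n * t ^ a)]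

lemma gaussianPDFReal_mul_exp_mul_sq (c x : ℝ) :
    gaussianPDFReal 0 1 x * exp (c * x ^ 2) = (√(2 * π))⁻¹ * exp (-(1 / 2 - c) * x ^ 2) := by
  rw [gaussianPDFReal, mul_assoc, ← exp_add]
  congr 3 <;> push_cast <;> ring

lemma integral_exp_mul_sq_gaussianReal {c : ℝ} (hc : c < 1 / 2) :
    ∫ x, exp (c * x ^ 2) ∂gaussianReal 0 1 = (√(1 - 2 * c))⁻¹ := by
  rw [integral_gaussianReal_eq_integral_smul one_ne_zero]
  simp_rw [smul_eq_mul, gaussianPDFReal_mul_exp_mul_sq]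
  rw [integral_const_mul, integral_gaussian, ← sqrt_inv, ← sqrt_mul (by positivity), ← sqrt_inv]
  congr 1
  have : 1 - 2 * c ≠ 0 := by linarith
  field_simp

lemma integrable_exp_mul_sq_gaussianReal {c : ℝ} (hc : c < 1 / 2) :
    Integrable (fun x => exp (c * x ^ 2)) (gaussianReal 0 1) := by
  refine Integrable.of_integral_ne_zero ?_
  rw [integral_exp_mul_sq_gaussianReal hc]
  have : 0 < 1 - 2 * c := by linarith
  positivity

instance (n : ℕ) : IsProbabilityMeasure (_root_.stdGaussian n) :=
  inferInstanceAs (IsProbabilityMeasure (Measure.pi fun _ => gaussianReal 0 1))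

lemma exp_mul_sum_sq (c : ℝ) {n : ℕ} (x : Fin n → ℝ) :
    exp (c * ∑ i, x i ^ 2) = ∏ i, exp (c * x i ^ 2) := by
  rw [Finset.mul_sum, exp_sum]

lemma integrable_exp_mul_sum_sq_stdGaussian {c : ℝ} (hc : c < 1 / 2) (n : ℕ) :
    Integrable (fun x => exp (c * ∑ i, x i ^ 2)) (stdGaussian n) := by
  simp_rw [exp_mul_sum_sq]
  exact Integrable.fintype_prod fun _ => integrable_exp_mul_sq_gaussianReal hc

lemma mgf_sum_sq_stdGaussian {c : ℝ} (hc : c < 1 / 2) (n : ℕ) :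
    mgf (fun x => ∑ i, x i ^ 2) (_root_.stdGaussian n) c = (√(1 - 2 * c))⁻¹ ^ n := by
  simp_rw [mgf, exp_mul_sum_sq]
  rw [_root_.stdGaussian, integral_fintype_prod_eq_pow (fun y => exp (c * y ^ 2)),
    integral_exp_mul_sq_gaussianReal hc, Fintype.card_fin]

/-- Chernoff's bound for the chi-squared variable `|X|²`, with the exponential moment at
`c = (1 - (√n / (√n + t))²) / 2`. -/
lemma stdGaussian_real_sqrt_add_lt_eucNorm_le {n : ℕ} (hn : 0 < n) {t : ℝ} (ht : 0 ≤ t) :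
    (stdGaussian n).real {x | √n + t < eucNorm x} ≤ exp (-t ^ 2 / 2) := by
  set s := √(n : ℝ)
  have hs : 0 < s := sqrt_pos.mpr (by exact_mod_cast hn)
  have hns : (n : ℝ) = s ^ 2 := (sq_sqrt (by positivity)).symm
  set c := (1 - (s / (s + t)) ^ 2) / 2
  have hq : s / (s + t) ≤ 1 := (div_le_one (by positivity)).mpr (by linarith)
  have hc0 : 0 ≤ c := by
    have : (s / (s + t)) ^ 2 ≤ 1 := pow_le_one₀ (by positivity) hq
    simp only [c]
    linarith
  have hc : c < 1 / 2 := by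
    have : 0 < (s / (s + t)) ^ 2 := by positivity
    simp only [c]
    linarith
  have hsqrt : √(1 - 2 * c) = s / (s + t) := by
    rw [show 1 - 2 * c = (s / (s + t)) ^ 2 by ring, sqrt_sq (by positivity)]
  have hsub : {x : Fin n → ℝ | s + t < eucNorm x} ⊆ {x | (s + t) ^ 2 ≤ ∑ i, x i ^ 2} :=
    fun x hx => ((lt_sqrt (by positivity)).mp hx).le
  calc (stdGaussian n).real {x | s + t < eucNorm x}
      ≤ (stdGaussian n).real {x | (s + t) ^ 2 ≤ ∑ i, x i ^ 2} := measureReal_mono hsub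
    _ ≤ exp (-c * (s + t) ^ 2) * mgf (fun x => ∑ i, x i ^ 2) (stdGaussian n) c :=
      measure_ge_le_exp_mul_mgf _ hc0 (integrable_exp_mul_sum_sq_stdGaussian hc n)
    _ = exp (-c * (s + t) ^ 2) * (t / s + 1) ^ n := by
      rw [mgf_sum_sq_stdGaussian hc, hsqrt, inv_div]
      congr 2
      field_simp
      ring
    _ ≤ exp (-c * (s + t) ^ 2) * exp (t / s) ^ n := by gcongr; exact add_one_le_exp _
    _ = exp (-t ^ 2 / 2) := by
      rw [← exp_nat_mul, ← exp_add, hns]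
      congr 1
      simp only [c]
      field_simp
      ring

lemma one_sub_exp_le_stdGaussian_real_eucNorm_le {n : ℕ} (hn : 0 < n) {t : ℝ} (ht : 0 ≤ t) :
    1 - exp (-t ^ 2 / 2) ≤ (stdGaussian n).real {x | eucNorm x ≤ √n + t} := by
  have hmeas : MeasurableSet {x : Fin n → ℝ | eucNorm x ≤ √n + t} :=
    measurableSet_le (by unfold eucNorm; fun_prop) measurable_const
  have hcompl := probReal_compl_eq_one_sub₀ (μ := stdGaussian n) hmeas.nullMeasurableSet
  have htail := stdGaussian_real_sqrt_add_lt_eucNorm_le hn ht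
  simp only [Set.compl_ofPred, not_le] at hcompl
  linarith

/-- Case IVb: there is a universal constant `C > 0` such that for `n ≥ 3`, `t > 0`,
`r ∈ (1/4, 1/2]`, `p = 2(1-r)` with `(1-2r) ln n < e`, and `X` standard Gaussian in `ℝ^n`:
(i) `∑ i^{-2r} x_[i]^{2(p-1)} ≤ C (ln n) |x|^{2(p-1)}` for all `x` (Euclidean norm `|·|`);
(ii) with probability at least `1 - C exp(-t²/2)`, `|X| ≤ C n^{1/2} + t`, and consequently
`∑ i^{-2r} X_[i]^{2(p-1)} ≤ C (ln n) t^{2(p-1)}`. -/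
theorem gradient_bound_case_IVb :
    ∃ C : ℝ, 0 < C ∧
      ∀ (n : ℕ) (t r p : ℝ), 3 ≤ n → 0 < t → 1 / 4 < r → r ≤ 1 / 2 →
        p = 2 * (1 - r) → (1 - 2 * r) * Real.log n < Real.exp 1 →
        (∀ x : Fin n → ℝ,
          ∑ i : Fin n, ((i : ℝ) + 1) ^ (-(2 * r)) * decRe x i ^ (2 * (p - 1)) ≤
            C * Real.log n * eucNorm x ^ (2 * (p - 1))) ∧
        (1 - C * Real.exp (-t ^ 2 / 2) ≤
          ((stdGaussian n) {x |
            eucNorm x ≤ C * (n : ℝ) ^ ((1 : ℝ) / 2) + t ∧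
            (∑ i : Fin n, ((i : ℝ) + 1) ^ (-(2 * r)) * decRe x i ^ (2 * (p - 1))) ≤
              C * Real.log n * t ^ (2 * (p - 1))}).toReal) := by
  set E := exp (exp 1)
  have hE : 1 ≤ E := one_le_exp (exp_pos 1).le
  refine ⟨4 * E ^ 2, by positivity, fun n t r p hn ht hr1 hr2 hp hlog => ?_⟩
  have hlogn := one_le_log_of_three_le hn
  have ha0 : 0 ≤ 2 * (p - 1) := by rw [hp]; linarith
  have ha1 : 2 * (p - 1) ≤ 1 := by rw [hp]; linarith
  have ha_log : 2 * (p - 1) * log n ≤ 2 * exp 1 := by rw [hp]; linarith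
  refine ⟨fun x => (weighted_sum_decRe_rpow_le hn hr2 hlog.le ha0 x).trans ?_, ?_⟩
  · exact mul_le_mul_of_nonneg_right (mul_le_mul_of_nonneg_right (by nlinarith) (by linarith))
      (rpow_nonneg (eucNorm_nonneg x) _)
  rcases le_or_gt t 1 with ht1 | ht1
  · have hexp : 1 / 2 ≤ exp (-t ^ 2 / 2) := by nlinarith [add_one_le_exp (-t ^ 2 / 2)]
    have hvacuous : 1 - 4 * E ^ 2 * exp (-t ^ 2 / 2) ≤ 0 := by nlinarith
    exact hvacuous.trans ENNReal.toReal_nonneg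
  calc 1 - 4 * E ^ 2 * exp (-t ^ 2 / 2) ≤ 1 - exp (-t ^ 2 / 2) := by
        have : 1 ≤ 4 * E ^ 2 := by nlinarith
        nlinarith [mul_le_mul_of_nonneg_right this (exp_pos (-t ^ 2 / 2)).le]
    _ ≤ (stdGaussian n).real {x | eucNorm x ≤ √n + t} :=
        one_sub_exp_le_stdGaussian_real_eucNorm_le (by omega) ht.le
    _ ≤ _ := by
      refine measureReal_mono fun x hx => ⟨?_, ?_⟩
      · rw [← sqrt_eq_rpow]
        have : √(n : ℝ) ≤ 4 * E ^ 2 * √n := le_mul_of_one_le_left (sqrt_nonneg _) (by nlinarith)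
        exact hx.out.trans (by linarith)
      · exact weighted_sum_decRe_rpow_le_of_eucNorm_le hn hr2 hlog.le ha0 ha1 ha_log ht1.le hx
end
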